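/- arXiv:2308.14554 — 2 statements merged into one kernel-verified Lean document; each statement's English description precedes it below -/
import Mathlib

section
/- Let d be a positive integer and let G be a countable graph with all vertex degrees at most d. If G is locally hyperfinite, then G is weighted hyperfinite. -/
open scoped ENNReal
open MeasureTheory

namespace AFPaper

variable {V : Type*} {W : Type*}

/-- The ball of radius `r` around `x` in the graph `G`. -/
def gball (G : SimpleGraph V) (x : V) (r : ℕ) : Set V :=
  {y | G.Reachable x y ∧ G.dist x y ≤ r}

/-- All vertex degrees of `G` are at most `d`. -/
def DegLE (G : SimpleGraph V) (d : ℕ) : Prop :=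
  ∀ v : V, (G.neighborSet v).Finite ∧ (G.neighborSet v).ncard ≤ d

/-- The boundary of `F` inside the induced subgraph on the ambient set `L`:
vertices of `F` adjacent (in `G`) to some vertex of `L` outside `F`. -/
def boundaryIn (G : SimpleGraph V) (L F : Set V) : Set V :=
  {x ∈ F | ∃ y ∈ L \ F, G.Adj x y}

/-- The boundary of `F` in `G`. -/
def boundary (G : SimpleGraph V) (F : Set V) : Set V :=
  boundaryIn G Set.univ F

/-- `F` is an `ε`-Følner set with respect to the induced subgraph on `L`. -/
def IsFolnerIn (G : SimpleGraph V) (L : Set V) (ε : ℝ) (F : Set V) : Prop :=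
  F.Finite ∧ ((boundaryIn G L F).ncard : ℝ) < ε * (F.ncard : ℝ)

/-- `F` is an `ε`-Følner set in `G`. -/
def IsFolner (G : SimpleGraph V) (ε : ℝ) (F : Set V) : Prop :=
  IsFolnerIn G Set.univ ε F

/-- The set `F` has diameter at most `r` in `G`. -/
def DiamLE (G : SimpleGraph V) (r : ℕ) (F : Set V) : Prop :=
  ∀ x ∈ F, ∀ y ∈ F, G.Reachable x y ∧ G.dist x y ≤ r

/-- The connected component of `x` in the subgraph of `G` induced on `S`. -/
def componentIn (G : SimpleGraph V) (S : Set V) (x : V) : Set V :=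
  {y | ∃ (hx : x ∈ S) (hy : y ∈ S), (G.induce S).Reachable ⟨x, hx⟩ ⟨y, hy⟩}

/-- All connected components of the subgraph induced on `S` have size at most `k`. -/
def SmallComponents (G : SimpleGraph V) (S : Set V) (k : ℕ) : Prop :=
  ∀ x ∈ S, (componentIn G S x).Finite ∧ (componentIn G S x).ncard ≤ k

/-- A witness for Property A with accuracy `ε` and radius `r`. -/
def PropertyAWith (G : SimpleGraph V) (ε : ℝ) (r : ℕ) : Prop :=
  ∃ Θ : V → V → ℝ,
    (∀ x, (Function.support (Θ x)).Finite) ∧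
    (∀ x y, 0 ≤ Θ x y) ∧
    (∀ x, (∑ᶠ y, Θ x y) = 1) ∧
    (∀ x y, Θ x y ≠ 0 → y ∈ gball G x r) ∧
    (∀ x y, G.Adj x y → (∑ᶠ z, |Θ x z - Θ y z|) < ε)

/-- Property A for graphs. -/
def PropertyA (G : SimpleGraph V) : Prop :=
  ∀ ε : ℝ, 0 < ε → ∃ r : ℕ, 1 ≤ r ∧ PropertyAWith G ε r

/-- Uniform local amenability. -/
def UniformlyLocallyAmenable (G : SimpleGraph V) : Prop :=
  ∀ ε : ℝ, 0 < ε → ∃ k : ℕ, 0 < k ∧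
    ∀ L : Set V, L.Finite → L.Nonempty →
      ∃ M : Set V, M ⊆ L ∧ M.Nonempty ∧ M.ncard ≤ k ∧ IsFolnerIn G L ε M

/-- Local hyperfiniteness. -/
def LocallyHyperfinite (G : SimpleGraph V) : Prop :=
  ∀ ε : ℝ, 0 < ε → ∃ k : ℕ, 0 < k ∧
    ∀ L : Set V, L.Finite → L.Nonempty →
      ∃ L' : Set V, L' ⊆ L ∧ ((L'.ncard : ℝ) < ε * (L.ncard : ℝ)) ∧
        SmallComponents G (L \ L') k

/-- Weighted hyperfiniteness. -/
def WeightedHyperfinite (G : SimpleGraph V) : Prop :=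
  ∀ ε : ℝ, 0 < ε → ∃ k : ℕ, 0 < k ∧
    ∀ w : V → ℝ, (Function.support w).Finite → (∀ x, 0 ≤ w x) →
      ∃ L : Set V, (∑ᶠ x ∈ L, w x) ≤ ε * (∑ᶠ x, w x) ∧ SmallComponents G Lᶜ k

/-- `Y` is a `k`-separator: deleting `Y` leaves components of size at most `k`. -/
def IsSeparator (G : SimpleGraph V) (k : ℕ) (Y : Set V) : Prop :=
  SmallComponents G Yᶜ k

/-- The space of `k`-separators, as a subspace of `V → Bool` (product of discrete
spaces); its Borel σ-algebra coincides with the induced product σ-algebra used here. -/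
abbrev SepSpace (G : SimpleGraph V) (k : ℕ) :=
  {f : V → Bool // IsSeparator G k {x | f x = true}}

/-- Strong hyperfiniteness. -/
def StronglyHyperfinite (G : SimpleGraph V) : Prop :=
  ∀ ε : ℝ, 0 < ε → ∃ k : ℕ, 0 < k ∧
    ∃ μ : Measure (SepSpace G k), μ Set.univ = 1 ∧
      ∀ x : V, μ {Y : SepSpace G k | Y.1 x = true} < ENNReal.ofReal ε

/-- An `(ε,r)`-Følner packing, encoded as a partial equivalence relation
`p : V → V → Bool` ("being in the same member of the packing"); the classes are the
members of the packing, and `p x x = false` exactly when `x` is not covered. -/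
structure IsPacking (G : SimpleGraph V) (ε : ℝ) (r : ℕ) (p : V → V → Bool) : Prop where
  symm : ∀ x y, p x y = true → p y x = true
  trans : ∀ x y z, p x y = true → p y z = true → p x z = true
  folner : ∀ x, p x x = true → IsFolner G ε {y | p x y = true}
  diam : ∀ x, p x x = true → DiamLE G r {y | p x y = true}

/-- The space of `(ε,r)`-packings of `G`, as a subspace of `V → V → Bool`. -/
abbrev PackingSpace (G : SimpleGraph V) (ε : ℝ) (r : ℕ) :=
  {p : V → V → Bool // IsPacking G ε r p}

/-- Strong Følner hyperfiniteness. -/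
def StronglyFolnerHyperfinite (G : SimpleGraph V) : Prop :=
  ∀ ε : ℝ, 0 < ε → ∃ r : ℕ, 1 ≤ r ∧
    ∃ ν : Measure (PackingSpace G ε r), ν Set.univ = 1 ∧
      ∀ x : V, ENNReal.ofReal (1 - ε) < ν {P : PackingSpace G ε r | P.1 x x = true}

/-- A packing is a tiling when it covers every vertex. -/
def IsTiling (p : V → V → Bool) : Prop := ∀ x, p x x = true

/-- Strong almost finiteness. -/
def StronglyAlmostFinite (G : SimpleGraph V) : Prop :=
  ∀ ε : ℝ, 0 < ε → ∃ r : ℕ, 1 ≤ r ∧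
    ∃ ν : Measure (PackingSpace G ε r), ν Set.univ = 1 ∧
      ν {P : PackingSpace G ε r | IsTiling P.1} = 1 ∧
      ∀ x : V, ν {P : PackingSpace G ε r | x ∈ boundary G {y | P.1 x y = true}} <
        ENNReal.ofReal ε

/-- Almost finiteness: `V(G)` can be tiled by `ε`-Følner sets of diameter at most `r`. -/
def AlmostFinite (G : SimpleGraph V) : Prop :=
  ∀ ε : ℝ, 0 < ε → ∃ r : ℕ, ∃ T : Set (Set V),
    (∀ F ∈ T, IsFolner G ε F ∧ DiamLE G r F) ∧
    T.PairwiseDisjoint id ∧ ⋃₀ T = Set.univ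

/-- Uniform amenability. -/
def UniformlyAmenable (G : SimpleGraph V) : Prop :=
  ∀ ε : ℝ, 0 < ε → ∃ r : ℕ, ∀ x : V, ∃ F : Set V, F ⊆ gball G x r ∧ IsFolner G ε F

/-- The `r`-neighborhood of a set `L`. -/
def setBall (G : SimpleGraph V) (L : Set V) (r : ℕ) : Set V :=
  ⋃ x ∈ L, gball G x r

/-- The uniform Følner property. -/
def UniformlyFolner (G : SimpleGraph V) : Prop :=
  ∀ ε : ℝ, 0 < ε → ∃ r : ℕ, 1 < r ∧
    ∀ L : Set V, L.Finite → L.Nonempty →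
      ∃ H : Set V, L ⊆ H ∧ H ⊆ setBall G L r ∧ IsFolner G ε H

/-- The Følner sum `Σ_x Σ_{y ∼ x} |f(x) − f(y)|`. -/
noncomputable def FolnerSum (G : SimpleGraph V) (f : V → ℝ) : ℝ :=
  ∑ᶠ x, ∑ᶠ y ∈ G.neighborSet x, |f x - f y|

/-- `f` is an `ε`-Følner function. -/
def IsFolnerFun (G : SimpleGraph V) (ε : ℝ) (f : V → ℝ) : Prop :=
  (Function.support f).Finite ∧ (∀ x, 0 ≤ f x) ∧ f ≠ 0 ∧
    FolnerSum G f < ε * (∑ᶠ x, f x)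

/-- `f` is an `ε`-Følner probability measure. -/
def IsFolnerProb (G : SimpleGraph V) (ε : ℝ) (f : V → ℝ) : Prop :=
  IsFolnerFun G ε f ∧ (∑ᶠ x, f x) = 1

/-- Følner Property A. -/
def FolnerPropertyA (G : SimpleGraph V) : Prop :=
  ∀ ε : ℝ, 0 < ε → ∃ r : ℕ, 1 ≤ r ∧
    ∃ Θ : V → V → ℝ,
      (∀ x, IsFolnerProb G ε (Θ x)) ∧
      (∀ x y, Θ x y ≠ 0 → y ∈ gball G x r) ∧
      (∀ x y, G.Adj x y → (∑ᶠ z, |Θ x z - Θ y z|) < ε)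

/-- The collection of `ε`-Følner sets of diameter at most `r`. -/
def FolnerSets (G : SimpleGraph V) (ε : ℝ) (r : ℕ) : Set (Set V) :=
  {H | IsFolner G ε H ∧ DiamLE G r H}

/-- Fractional almost finiteness. -/
def FractionallyAlmostFinite (G : SimpleGraph V) : Prop :=
  ∀ ε : ℝ, 0 < ε → ∃ r : ℕ, 1 ≤ r ∧
    ∃ F : Set V → ℝ,
      (∀ H ∈ FolnerSets G ε r, 0 ≤ F H) ∧
      (∀ x : V, ∃ c : ℝ, 0 ≤ c ∧ c < ε ∧
        (∑ᶠ H ∈ {H ∈ FolnerSets G ε r | x ∈ H}, F H) = 1 - c) ∧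
      (∀ x : V, (∑ᶠ H ∈ {H ∈ FolnerSets G ε r | x ∈ boundary G H}, F H) < ε)

/-- Subexponential growth: `lim_{r→∞} sup_x log|B_r(x)|/r = 0`. -/
def SubexpGrowth (G : SimpleGraph V) : Prop :=
  ∀ ε : ℝ, 0 < ε → ∃ R : ℕ, ∀ r : ℕ, R ≤ r → ∀ x : V,
    Real.log ((gball G x r).ncard : ℝ) < ε * (r : ℝ)

/-- The rooted `r`-ball of `G` at `v` is rooted-isomorphic to the rooted `r`-ball of
`H` at `w`. -/
def BallIso (G : SimpleGraph V) (v : V) (H : SimpleGraph W) (w : W) (r : ℕ) : Prop :=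
  ∃ (hv : v ∈ gball G v r) (hw : w ∈ gball H w r)
    (φ : ↥(gball G v r) ≃ ↥(gball H w r)),
      φ ⟨v, hv⟩ = ⟨w, hw⟩ ∧
      ∀ a b : ↥(gball G v r), G.Adj ↑a ↑b ↔ H.Adj ↑(φ a) ↑(φ b)

/-- Neighborhood equivalence of graphs. -/
def NeighborhoodEquiv (G : SimpleGraph V) (H : SimpleGraph W) : Prop :=
  (∀ (r : ℕ) (v : V), ∃ w : W, BallIso G v H w r) ∧
  (∀ (r : ℕ) (w : W), ∃ v : V, BallIso H w G v r)

end AFPaper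

/-!
Delete the vertices having a neighbour at least `T` times heavier: charging each of them to that
neighbour shows they carry at most a `d / T` fraction of the weight. Delete also one residue class
modulo `m` of the levels `⌊log_T w⌋`, chosen of least weight, so at most a `1 / m` fraction. Across
a remaining edge the level changes by at most one, so it cannot jump over the deleted class: every
remaining connected piece lies within fewer than `m` consecutive levels, where weights agree up to
the factor `T ^ m`. Removing a `δ`-fraction of the vertices of each piece by local hyperfiniteness
therefore costs at most a `δ T ^ m` fraction of its weight.
-/

open Finset

theorem exists_nat_one_lt_div_le (a : ℝ) {δ : ℝ} (hδ : 0 < δ) :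
    ∃ n : ℕ, 1 < n ∧ a / n ≤ δ := by
  obtain ⟨n, hn⟩ := exists_nat_gt (a / δ)
  refine ⟨n + 2, by omega, ?_⟩
  rw [div_lt_iff₀ hδ] at hn
  rw [div_le_iff₀ (by positivity)]
  push_cast
  nlinarith

theorem Finset.sum_le_sum_add_sum_of_subset_union {ι : Type*} [DecidableEq ι] {s t u : Finset ι}
    {w : ι → ℝ} (h : s ⊆ t ∪ u) (hw : ∀ x ∈ t ∪ u, 0 ≤ w x) :
    ∑ x ∈ s, w x ≤ ∑ x ∈ t, w x + ∑ x ∈ u, w x := by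
  rw [← sum_union_inter]
  have : 0 ≤ ∑ x ∈ t ∩ u, w x :=
    sum_nonneg fun x hx => hw x (mem_union_left u (mem_inter.mp hx).1)
  have := sum_le_sum_of_subset_of_nonneg h fun x hx _ => hw x hx
  linarith

theorem Finset.sum_le_of_card_le_of_le_mul {ι : Type*} {R B : Finset ι} {w : ι → ℝ} {c Λ : ℝ}
    (hw : ∀ y ∈ B, 0 ≤ w y) (hΛ : 0 ≤ Λ) (hcard : (#R : ℝ) ≤ c * #B)
    (hRB : ∀ x ∈ R, ∀ y ∈ B, w x ≤ Λ * w y) :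
    ∑ x ∈ R, w x ≤ c * Λ * ∑ y ∈ B, w y := by
  rcases B.eq_empty_or_nonempty with rfl | hB
  · have : R = ∅ := by simpa using hcard
    simp [this]
  have hB : (0 : ℝ) < #B := by exact_mod_cast hB.card_pos
  have hΛB : 0 ≤ Λ * ∑ y ∈ B, w y := mul_nonneg hΛ (sum_nonneg hw)
  have key : #B * ∑ x ∈ R, w x ≤ #R * (Λ * ∑ y ∈ B, w y) :=
    calc #B * ∑ x ∈ R, w x = ∑ x ∈ R, ∑ _y ∈ B, w x := by simp [mul_sum]
      _ ≤ ∑ _x ∈ R, ∑ y ∈ B, Λ * w y := sum_le_sum fun x hx => sum_le_sum (hRB x hx)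
      _ = #R * (Λ * ∑ y ∈ B, w y) := by simp [mul_sum]
  nlinarith [mul_le_mul_of_nonneg_right hcard hΛB]

theorem Int.ediv_eq_ediv_of_emod_ne_zero {a b m : ℤ} (hm : 0 < m) (ha : a % m ≠ 0)
    (hb : b % m ≠ 0) (hab : b ≤ a + 1) (hba : a ≤ b + 1) : a / m = b / m := by
  have ha' := Int.emod_add_mul_ediv a m
  have hb' := Int.emod_add_mul_ediv b m
  have := Int.emod_nonneg a hm.ne'
  have := Int.emod_nonneg b hm.ne'
  have := Int.emod_lt_of_pos a hm
  have := Int.emod_lt_of_pos b hm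
  rcases lt_trichotomy (a / m) (b / m) with h | h | h
  · have := mul_le_mul_of_nonneg_left (Int.add_one_le_iff.mpr h) hm.le
    rw [mul_add_one] at this
    omega
  · exact h
  · have := mul_le_mul_of_nonneg_left (Int.add_one_le_iff.mpr h) hm.le
    rw [mul_add_one] at this
    omega

theorem Int.lt_add_of_ediv_eq {a b m : ℤ} (hm : 0 < m) (h : a / m = b / m) : b < a + m := by
  have ha' := Int.emod_add_mul_ediv a m
  have hb' := Int.emod_add_mul_ediv b m
  have := Int.emod_nonneg a hm.ne'
  have := Int.emod_lt_of_pos b hm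
  rw [h] at ha'
  omega

theorem Finset.exists_sum_filter_sub_emod_eq_zero_le {ι : Type*} (F : Finset ι) (g : ι → ℤ)
    (w : ι → ℝ) {m : ℕ} (hm : 0 < m) :
    ∃ s : ℤ, ∑ x ∈ F with (g x - s) % m = 0, w x ≤ (∑ x ∈ F, w x) / m := by
  have hmaps : ∀ x ∈ F, g x % m ∈ Ico (0 : ℤ) m := fun x _ =>
    mem_Ico.mpr ⟨Int.emod_nonneg _ (by omega), Int.emod_lt_of_pos _ (by omega)⟩
  have hsum : ∑ x ∈ F, w x ≤ #(Ico (0 : ℤ) m) • ((∑ x ∈ F, w x) / m) := by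
    rw [Int.card_Ico, sub_zero, Int.toNat_natCast, nsmul_eq_mul,
      mul_div_cancel₀ _ (by positivity)]
  obtain ⟨s, hs, hle⟩ := exists_sum_fiber_le_of_maps_to_of_sum_le_nsmul hmaps
    ⟨0, by simp [hm]⟩ hsum
  refine ⟨s, le_of_eq_of_le (sum_congr (filter_congr fun x _ => ?_) fun _ _ => rfl) hle⟩
  obtain ⟨hs₀, hsm⟩ := mem_Ico.mp hs
  rw [← Int.emod_eq_emod_iff_emod_sub_eq_zero, Int.emod_eq_of_lt hs₀ hsm]

section IntLog

variable {R : Type*} [Semifield R] [LinearOrder R] [IsStrictOrderedRing R] [FloorSemiring R]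
  {b : ℕ} {r s : R}

theorem Int.log_le_log_add_one_of_le_mul (hb : 1 < b) (hs : 0 < s) (h : s ≤ b * r) :
    Int.log b s ≤ Int.log b r + 1 := by
  have hb0 : (b : R) ≠ 0 := by positivity
  have : s < (b : R) ^ (Int.log b r + 1 + 1) := by
    rw [zpow_add_one₀ hb0, mul_comm]
    exact h.trans_lt (mul_lt_mul_of_pos_left (Int.lt_zpow_succ_log_self hb r) (by positivity))
  exact Int.lt_add_one_iff.mp ((Int.lt_zpow_iff_log_lt hb hs).mp this)

theorem Int.lt_pow_mul_of_log_lt_log_add (hb : 1 < b) (hr : 0 < r) {n : ℕ}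
    (h : Int.log b s < Int.log b r + n) : s < (b : R) ^ n * r :=
  calc s < (b : R) ^ (Int.log b s + 1) := Int.lt_zpow_succ_log_self hb s
    _ ≤ (b : R) ^ ((n : ℤ) + Int.log b r) :=
      zpow_le_zpow_right₀ (by exact_mod_cast hb.le) (by omega)
    _ = (b : R) ^ n * (b : R) ^ Int.log b r := by
      rw [zpow_add₀ (by positivity), zpow_natCast]
    _ ≤ (b : R) ^ n * r := by
      gcongr
      exact Int.zpow_log_le_self hb hr

end IntLog

namespace AFPaper

variable {V ι : Type*} {G : SimpleGraph V}

theorem componentIn_subset_componentIn_fiber {A : Set V} {f : V → ι}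
    (hf : ∀ u ∈ A, ∀ v ∈ A, G.Adj u v → f u = f v) (x : V) :
    componentIn G A x ⊆ componentIn G {y ∈ A | f y = f x} x := by
  rintro y ⟨hx, hy, hxy⟩
  rw [SimpleGraph.reachable_iff_reflTransGen] at hxy
  suffices ∀ z : A, Relation.ReflTransGen (G.induce A).Adj ⟨x, hx⟩ z →
      ∃ h : f z = f x, (G.induce {y ∈ A | f y = f x}).Reachable ⟨x, hx, rfl⟩ ⟨z, z.2, h⟩ by
    obtain ⟨h, hr⟩ := this _ hxy
    exact ⟨⟨hx, rfl⟩, ⟨hy, h⟩, hr⟩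
  intro z hz
  induction hz with
  | refl => exact ⟨rfl, .rfl⟩
  | @tail z₁ z₂ _ hadj ih =>
    obtain ⟨h, hr⟩ := ih
    have h₂ : f z₂ = f x := (hf _ z₂.2 _ z₁.2 hadj.symm).trans h
    have hadj' : (G.induce {y ∈ A | f y = f x}).Adj ⟨z₁, z₁.2, h⟩ ⟨z₂, z₂.2, h₂⟩ := hadj
    exact ⟨h₂, hr.trans hadj'.reachable⟩

theorem SmallComponents.of_fibers {A : Set V} {f : V → ι} {k : ℕ}
    (hf : ∀ u ∈ A, ∀ v ∈ A, G.Adj u v → f u = f v)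
    (h : ∀ i, SmallComponents G {y ∈ A | f y = i} k) : SmallComponents G A k := by
  intro x hx
  obtain ⟨hfin, hcard⟩ := h (f x) x ⟨hx, rfl⟩
  have hsub := componentIn_subset_componentIn_fiber hf x
  exact ⟨hfin.subset hsub, (Set.ncard_le_ncard hsub hfin).trans hcard⟩

theorem DegLE.card_filter_adj_le [DecidableRel G.Adj] {d : ℕ} (hdeg : DegLE G d)
    (S : Finset V) (y : V) : #{x ∈ S | G.Adj x y} ≤ d := by
  have hsub : (↑{x ∈ S | G.Adj x y} : Set V) ⊆ G.neighborSet y := fun x hx =>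
    (mem_filter.mp hx).2.symm
  rw [← Set.ncard_coe_finset]
  exact (Set.ncard_le_ncard hsub (hdeg y).1).trans (hdeg y).2

theorem DegLE.mul_sum_filter_heavy_le [DecidableRel G.Adj] {d : ℕ} (hdeg : DegLE G d)
    {w : V → ℝ} (T : ℝ) (S : Finset V) (hw : ∀ x ∈ S, 0 ≤ w x) :
    T * ∑ x ∈ S with ∃ y ∈ S, G.Adj x y ∧ T * w x ≤ w y, w x ≤ d * ∑ x ∈ S, w x := by
  classical
  calc T * ∑ x ∈ S with ∃ y ∈ S, G.Adj x y ∧ T * w x ≤ w y, w x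
      ≤ ∑ x ∈ S with ∃ y ∈ S, G.Adj x y ∧ T * w x ≤ w y, ∑ y ∈ S with G.Adj x y, w y := by
        rw [mul_sum]
        refine sum_le_sum fun x hx => ?_
        obtain ⟨y, hyS, hxy, hy⟩ := (mem_filter.mp hx).2
        exact hy.trans (single_le_sum (fun z hz => hw z (mem_filter.mp hz).1)
          (mem_filter.mpr ⟨hyS, hxy⟩))
    _ ≤ ∑ x ∈ S, ∑ y ∈ S with G.Adj x y, w y :=
        sum_le_sum_of_subset_of_nonneg (filter_subset _ _) fun x _ _ =>
          sum_nonneg fun y hy => hw y (mem_filter.mp hy).1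
    _ = ∑ y ∈ S, #{x ∈ S | G.Adj x y} * w y := by
        rw [sum_comm' (t' := S) (s' := fun y => {x ∈ S | G.Adj x y}) (fun x y => by
          simp only [mem_filter]; tauto)]
        simp
    _ ≤ d * ∑ x ∈ S, w x := by
        rw [mul_sum]
        exact sum_le_sum fun y hy => mul_le_mul_of_nonneg_right
          (by exact_mod_cast hdeg.card_filter_adj_le S y) (hw y hy)

structure IsBalancedPartition (G : SimpleGraph V) (w : V → ℝ) (Λ : ℝ) (M : Finset V)
    (f : V → ι) : Prop where
  eq_of_adj : ∀ u ∈ M, ∀ v ∈ M, G.Adj u v → f u = f v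
  le_mul_of_eq : ∀ u ∈ M, ∀ v ∈ M, f u = f v → w v ≤ Λ * w u

theorem DegLE.exists_isBalancedPartition [DecidableEq V] {d : ℕ} (hdeg : DegLE G d) {w : V → ℝ}
    (S : Finset V) (hS : ∀ x ∈ S, 0 < w x) {T m : ℕ} (hT : 1 < T) (hm : 0 < m) :
    ∃ M ⊆ S, ∑ x ∈ S \ M, w x ≤ (d / T + 1 / m) * ∑ x ∈ S, w x ∧
      ∃ f : V → ℤ, IsBalancedPartition G w ((T : ℝ) ^ m) M f := by
  classical
  set heavy := {x ∈ S | ∃ y ∈ S, G.Adj x y ∧ (T : ℝ) * w x ≤ w y}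
  set j : V → ℤ := fun x => Int.log T (w x)
  obtain ⟨s, hs⟩ := S.exists_sum_filter_sub_emod_eq_zero_le j w hm
  set M := {x ∈ S \ heavy | (j x - s) % m ≠ 0}
  have hMS : M ⊆ S := (filter_subset _ _).trans sdiff_subset
  have hstep : ∀ u ∈ M, ∀ v ∈ M, G.Adj u v → j v ≤ j u + 1 := by
    intro u hu v hv huv
    have hu_light : u ∉ heavy := (mem_sdiff.mp (mem_filter.mp hu).1).2
    refine Int.log_le_log_add_one_of_le_mul hT (hS v (hMS hv)) (le_of_not_ge fun h => ?_)
    exact hu_light (mem_filter.mpr ⟨hMS hu, v, hMS hv, huv, h⟩)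
  refine ⟨M, hMS, ?_, fun x => (j x - s) / m,
    ⟨fun u hu v hv huv => ?_, fun u hu v hv huv => ?_⟩⟩
  · have hheavy : ∑ x ∈ heavy, w x ≤ d / T * ∑ x ∈ S, w x := by
      rw [div_mul_eq_mul_div, le_div_iff₀ (by positivity), mul_comm]
      exact hdeg.mul_sum_filter_heavy_le _ S fun x hx => (hS x hx).le
    have hsub : S \ M ⊆ heavy ∪ {x ∈ S | (j x - s) % m = 0} := by
      intro x hx
      simp only [M, mem_sdiff, mem_filter, mem_union, heavy, ne_eq] at hx ⊢
      by_cases h : (j x - s) % m = 0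
      · exact .inr ⟨hx.1, h⟩
      · exact .inl (by_contra fun hc => hx.2 ⟨⟨hx.1, hc⟩, h⟩)
    have hnonneg : ∀ x ∈ heavy ∪ {x ∈ S | (j x - s) % m = 0}, 0 ≤ w x := fun x hx =>
      (hS x (union_subset (filter_subset _ _) (filter_subset _ _) hx)).le
    calc ∑ x ∈ S \ M, w x
        ≤ ∑ x ∈ heavy, w x + ∑ x ∈ S with (j x - s) % m = 0, w x :=
          sum_le_sum_add_sum_of_subset_union hsub hnonneg
      _ ≤ d / T * ∑ x ∈ S, w x + (∑ x ∈ S, w x) / m := add_le_add hheavy hs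
      _ = (d / T + 1 / m) * ∑ x ∈ S, w x := by ring
  · exact Int.ediv_eq_ediv_of_emod_ne_zero (by omega) (mem_filter.mp hu).2 (mem_filter.mp hv).2
      (by linarith [hstep u hu v hv huv]) (by linarith [hstep v hv u hu huv.symm])
  · have := Int.lt_add_of_ediv_eq (by omega) huv
    exact (Int.lt_pow_mul_of_log_lt_log_add hT (hS u (hMS hu)) (show j v < j u + m by omega)).le

def HasLocalSeparators (G : SimpleGraph V) (δ : ℝ) (k : ℕ) : Prop :=
  ∀ L : Set V, L.Finite → L.Nonempty →
    ∃ L' : Set V, L' ⊆ L ∧ ((L'.ncard : ℝ) < δ * (L.ncard : ℝ)) ∧ SmallComponents G (L \ L') k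

variable {δ : ℝ} {k : ℕ}

theorem HasLocalSeparators.exists_finset [DecidableEq V] (h : HasLocalSeparators G δ k)
    (B : Finset V) : ∃ R ⊆ B, (#R : ℝ) ≤ δ * #B ∧ SmallComponents G ↑(B \ R) k := by
  rcases B.eq_empty_or_nonempty with rfl | hB
  · exact ⟨∅, subset_rfl, by simp, fun x hx => by simp at hx⟩
  obtain ⟨L', hL'B, hcard, hsmall⟩ := h B B.finite_toSet (by exact_mod_cast hB)
  obtain ⟨R, rfl⟩ := (B.finite_toSet.subset hL'B).exists_finset_coe
  refine ⟨R, by exact_mod_cast hL'B, ?_, by rwa [coe_sdiff]⟩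
  simpa only [Set.ncard_coe_finset] using hcard.le

theorem HasLocalSeparators.exists_sum_le_of_isBalancedPartition [DecidableEq V]
    (h : HasLocalSeparators G δ k) {w : V → ℝ} {Λ : ℝ} {M : Finset V} {f : V → ι}
    (hw : ∀ x ∈ M, 0 ≤ w x) (hΛ : 0 ≤ Λ) (hf : IsBalancedPartition G w Λ M f) :
    ∃ R ⊆ M, ∑ x ∈ R, w x ≤ δ * Λ * ∑ x ∈ M, w x ∧ SmallComponents G ↑(M \ R) k := by
  classical
  choose R hRB hRcard hRsmall using fun i => h.exists_finset {x ∈ M | f x = i}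
  have hfiber : ∀ i, {x ∈ {x ∈ M | x ∈ R (f x)} | f x = i} = R i := by
    intro i
    ext x
    simp only [mem_filter]
    constructor
    · rintro ⟨⟨-, hx⟩, rfl⟩
      exact hx
    · intro hx
      obtain ⟨hxM, rfl⟩ := mem_filter.mp (hRB _ hx)
      exact ⟨⟨hxM, hx⟩, rfl⟩
  have hmaps : ∀ x ∈ M, f x ∈ M.image f := fun x hx => mem_image_of_mem f hx
  refine ⟨{x ∈ M | x ∈ R (f x)}, filter_subset _ _, ?_, ?_⟩
  · calc ∑ x ∈ M with x ∈ R (f x), w x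
        = ∑ i ∈ M.image f, ∑ x ∈ R i, w x := by
          rw [← sum_fiberwise_of_maps_to fun x hx => hmaps x (mem_filter.mp hx).1]
          exact sum_congr rfl fun i _ => by rw [hfiber]
      _ ≤ ∑ i ∈ M.image f, δ * Λ * ∑ x ∈ M with f x = i, w x := by
          refine sum_le_sum fun i _ => sum_le_of_card_le_of_le_mul
            (fun y hy => hw y (mem_filter.mp hy).1) hΛ (hRcard i) fun x hx y hy => ?_
          obtain ⟨hxM, hxi⟩ := mem_filter.mp (hRB i hx)
          obtain ⟨hyM, hyi⟩ := mem_filter.mp hy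
          exact hf.le_mul_of_eq y hyM x hxM (hyi.trans hxi.symm)
      _ = δ * Λ * ∑ x ∈ M, w x := by rw [← mul_sum, sum_fiberwise_of_maps_to hmaps]
  · refine SmallComponents.of_fibers (f := f) (fun u hu v hv => hf.eq_of_adj u ?_ v ?_)
      fun i => ?_
    · exact (mem_sdiff.mp hu).1
    · exact (mem_sdiff.mp hv).1
    convert hRsmall i using 1
    ext x
    simp only [Set.mem_ofPred_eq, coe_sdiff, Set.mem_sdiff, mem_coe, mem_filter]
    constructor
    · rintro ⟨⟨hxM, hxR⟩, rfl⟩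
      exact ⟨⟨hxM, rfl⟩, fun hx => hxR ⟨hxM, hx⟩⟩
    · rintro ⟨⟨hxM, rfl⟩, hxR⟩
      exact ⟨⟨hxM, fun hx => hxR hx.2⟩, rfl⟩

theorem locallyHyperfinite_implies_weightedHyperfinite_general
    (d : ℕ) {V : Type}
    (G : SimpleGraph V) (hdeg : DegLE G d)
    (hLH : LocallyHyperfinite G) :
    WeightedHyperfinite G := by
  classical
  intro ε hε
  obtain ⟨T, hT, hTd⟩ := exists_nat_one_lt_div_le d (by positivity : 0 < ε / 3)
  obtain ⟨m, hm, hmε⟩ := exists_nat_one_lt_div_le 1 (by positivity : 0 < ε / 3)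
  obtain ⟨k, hk, hsep⟩ := hLH (ε / 3 / (T : ℝ) ^ m) (by positivity)
  refine ⟨k, hk, fun w hw hw0 => ?_⟩
  set S := hw.toFinset
  obtain ⟨M, hMS, hM, f, hf⟩ := hdeg.exists_isBalancedPartition S
    (fun x hx => (hw0 x).lt_of_ne' (by simpa [S] using hx)) hT (zero_lt_one.trans hm)
  obtain ⟨R, -, hR, hsmall⟩ :=
    HasLocalSeparators.exists_sum_le_of_isBalancedPartition hsep (fun x _ => hw0 x)
      (by positivity) hf
  refine ⟨(↑(M \ R))ᶜ, ?_, by rwa [compl_compl]⟩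
  rw [finsum_mem_eq_sum_of_inter_support_eq w (t := S \ (M \ R)) (by ext; aesop),
    finsum_eq_sum_of_support_subset w hw.coe_toFinset.ge]
  have hW : 0 ≤ ∑ x ∈ S, w x := sum_nonneg fun x _ => hw0 x
  calc ∑ x ∈ S \ (M \ R), w x ≤ ∑ x ∈ S \ M, w x + ∑ x ∈ R, w x :=
        sum_le_sum_add_sum_of_subset_union (fun x => by simp only [mem_sdiff, mem_union]; tauto)
          fun x _ => hw0 x
    _ ≤ (d / T + 1 / m) * ∑ x ∈ S, w x + ε / 3 / T ^ m * T ^ m * ∑ x ∈ S, w x :=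
        add_le_add hM (hR.trans (by gcongr; exact fun x _ _ => hw0 x))
    _ ≤ ε * ∑ x ∈ S, w x := by
        rw [div_mul_cancel₀ _ (by positivity)]
        nlinarith

/-- Local hyperfiniteness implies weighted hyperfiniteness. -/
theorem locallyHyperfinite_implies_weightedHyperfinite
    (d : ℕ) (hd : 0 < d) {V : Type} [Countable V]
    (G : SimpleGraph V) (hdeg : DegLE G d)
    (hLH : LocallyHyperfinite G) :
    WeightedHyperfinite G :=
  locallyHyperfinite_implies_weightedHyperfinite_general d G hdeg hLH

end AFPaper
end

section
/- Let d be a positive integer and let G be a countable graph with all vertex degrees at most d. If G is strongly hyperfinite, then G has Property A. -/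
open scoped ENNReal
open MeasureTheory

/-!
Let `Y` be a `μ`-random `k`-separator with `μ(x ∈ Y) < ε/4` for every `x`. Removing `Y` partitions
`V` into the components of `V ∖ Y` (each of size at most `k`, hence inside the `k`-ball of any of its
points) and the singletons of `Y`. Let `Θ x` be the `μ`-average of the uniform probability measure on
the block of `x`. If `x ∼ y` and neither lies in `Y`, then `x` and `y` lie in the same block, so the
two uniform measures coincide; otherwise they differ by at most `2` in `ℓ¹`. Hence
`‖Θ x - Θ y‖₁ ≤ 2 (μ(x ∈ Y) + μ(y ∈ Y)) < ε`. Bounded degree makes the `k`-balls finite, so `Θ x`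
is finitely supported.
-/

namespace AFPaper

open SimpleGraph

variable {V : Type*} {G : SimpleGraph V}

lemma mem_gball_self (x : V) (r : ℕ) : x ∈ gball G x r :=
  ⟨.refl x, by simp⟩

lemma gball_zero (x : V) : gball G x 0 = {x} := by
  ext y
  refine ⟨fun ⟨h, hd⟩ => (h.dist_eq_zero_iff.1 (Nat.le_zero.1 hd)).symm, ?_⟩
  rintro rfl
  exact mem_gball_self _ 0

lemma gball_succ_subset (x : V) (r : ℕ) :
    gball G x (r + 1) ⊆ insert x (⋃ v ∈ G.neighborSet x, gball G v r) := by
  rintro y ⟨hxy, hd⟩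
  obtain ⟨w, hw⟩ := hxy.exists_walk_length_eq_dist
  cases w with
  | nil => exact Set.mem_insert _ _
  | cons h p =>
    refine Set.mem_insert_of_mem _ (Set.mem_biUnion h ⟨p.reachable, (dist_le p).trans ?_⟩)
    rw [Walk.length_cons] at hw
    omega

lemma gball_finite (hG : ∀ v, (G.neighborSet v).Finite) (x : V) (r : ℕ) :
    (gball G x r).Finite := by
  induction r generalizing x with
  | zero => simp [gball_zero]
  | succ r ih => exact (((hG x).biUnion fun v _ => ih v).insert x).subset (gball_succ_subset x r)

section Components

variable {S S' : Set V} {x y : V}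

lemma mem_componentIn_iff : y ∈ componentIn G S x ↔ ∃ w : G.Walk x y, ∀ v ∈ w.support, v ∈ S := by
  constructor
  · rintro ⟨hx, hy, ⟨w⟩⟩
    refine ⟨(w.map (Embedding.induce S).toHom : G.Walk x y), fun v hv => ?_⟩
    obtain ⟨u, -, rfl⟩ := List.mem_map.1 ((Walk.support_map _ _) ▸ hv)
    exact u.2
  · rintro ⟨w, hw⟩
    exact ⟨_, _, ⟨w.induce S hw⟩⟩

lemma componentIn_subset : componentIn G S x ⊆ S :=
  fun _ ⟨_, hy, _⟩ => hy

lemma mem_componentIn_self (hx : x ∈ S) : x ∈ componentIn G S x :=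
  ⟨hx, hx, .refl _⟩

lemma componentIn_eq_empty (hx : x ∉ S) : componentIn G S x = ∅ :=
  Set.eq_empty_of_forall_notMem fun _ ⟨hx', _⟩ => hx hx'

lemma support_subset_componentIn (w : G.Walk x y) (hw : ∀ v ∈ w.support, v ∈ S) :
    ∀ v ∈ w.support, v ∈ componentIn G S x := by
  classical
  intro v hv
  exact mem_componentIn_iff.2
    ⟨w.takeUntil v hv, fun u hu => hw u (w.support_takeUntil_subset_support hv hu)⟩

lemma componentIn_subset_componentIn (h : componentIn G S x ⊆ S') :
    componentIn G S x ⊆ componentIn G S' x := by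
  intro z hz
  obtain ⟨w, hw⟩ := mem_componentIn_iff.1 hz
  exact mem_componentIn_iff.2 ⟨w, fun v hv => h (support_subset_componentIn w hw v hv)⟩

lemma componentIn_eq_of_adj (hx : x ∈ S) (hy : y ∈ S) (hxy : G.Adj x y) :
    componentIn G S x = componentIn G S y := by
  have hxy' : (G.induce S).Adj ⟨x, hx⟩ ⟨y, hy⟩ := hxy
  ext z
  exact ⟨fun ⟨_, hz, h⟩ => ⟨hy, hz, hxy'.symm.reachable.trans h⟩,
    fun ⟨_, hz, h⟩ => ⟨hx, hz, hxy'.reachable.trans h⟩⟩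

/-- A shortest path inside the component visits distinct vertices of it. -/
lemma componentIn_subset_gball_of_ncard_le {r : ℕ} (hfin : (componentIn G S x).Finite)
    (hcard : (componentIn G S x).ncard ≤ r + 1) : componentIn G S x ⊆ gball G x r := by
  classical
  intro z hz
  obtain ⟨w, hw⟩ := mem_componentIn_iff.1 hz
  have hsub : ∀ v ∈ w.bypass.support, v ∈ componentIn G S x :=
    support_subset_componentIn w.bypass fun v hv => hw v (w.support_bypass_subset_support hv)
  have hlen : w.bypass.length + 1 ≤ (componentIn G S x).ncard := by
    rw [← Walk.length_support, ← List.toFinset_card_of_nodup w.bypass_isPath.support_nodup,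
      ← Set.ncard_coe_finset]
    exact Set.ncard_le_ncard (fun v hv => hsub v (List.mem_toFinset.1 hv)) hfin
  exact ⟨⟨w⟩, (dist_le w.bypass).trans (by omega)⟩

end Components

section SmallComponents

variable {S S' : Set V} {k : ℕ}

lemma SmallComponents.componentIn_subset_gball (h : SmallComponents G S k) (x : V) :
    componentIn G S x ⊆ gball G x k := by
  by_cases hx : x ∈ S
  · exact componentIn_subset_gball_of_ncard_le (h x hx).1 ((h x hx).2.trans k.le_succ)
  · simp [componentIn_eq_empty hx]

lemma SmallComponents.componentIn_congr (hS : SmallComponents G S k)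
    (hS' : SmallComponents G S' k) {x : V} (h : ∀ v ∈ gball G x k, v ∈ S ↔ v ∈ S') :
    componentIn G S x = componentIn G S' x :=
  (componentIn_subset_componentIn fun _ hv =>
      (h _ (hS.componentIn_subset_gball x hv)).1 (componentIn_subset hv)).antisymm
    (componentIn_subset_componentIn fun _ hv =>
      (h _ (hS'.componentIn_subset_gball x hv)).2 (componentIn_subset hv))

end SmallComponents

/-- The block of `x` in the partition of `V` into the components of `S` and the points of `Sᶜ`. -/
def cell (G : SimpleGraph V) (S : Set V) (x : V) : Set V :=
  insert x (componentIn G S x)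

lemma cell_eq_of_adj {S : Set V} {x y : V} (hx : x ∈ S) (hy : y ∈ S) (hxy : G.Adj x y) :
    cell G S x = cell G S y := by
  rw [cell, cell, Set.insert_eq_of_mem (mem_componentIn_self hx),
    Set.insert_eq_of_mem (mem_componentIn_self hy), componentIn_eq_of_adj hx hy hxy]

lemma SmallComponents.cell_subset_gball {S : Set V} {k : ℕ} (h : SmallComponents G S k)
    (x : V) : cell G S x ⊆ gball G x k :=
  Set.insert_subset (mem_gball_self x k) (h.componentIn_subset_gball x)

section UnifDensity

variable {A B : Set V}

noncomputable def unifDensity (A : Set V) : V → ℝ :=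
  A.indicator fun _ => (A.ncard : ℝ)⁻¹

lemma unifDensity_nonneg (z : V) : 0 ≤ unifDensity A z :=
  Set.indicator_nonneg (fun _ _ => inv_nonneg.2 (Nat.cast_nonneg _)) z

lemma unifDensity_le_one (z : V) : unifDensity A z ≤ 1 :=
  Set.indicator_apply_le' (fun _ => Nat.cast_inv_le_one _) fun _ => zero_le_one

lemma unifDensity_of_notMem {z : V} (hz : z ∉ A) : unifDensity A z = 0 :=
  Set.indicator_of_notMem hz _

lemma sum_unifDensity (hA : A.Finite) (hne : A.Nonempty) {s : Finset V} (hs : A ⊆ s) :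
    ∑ z ∈ s, unifDensity A z = 1 := by
  have hsub : hA.toFinset ⊆ s := fun z hz => hs ((hA.mem_toFinset).1 hz)
  rw [unifDensity, ← hA.coe_toFinset, Finset.sum_indicator_subset _ hsub, Finset.sum_const,
    nsmul_eq_mul, ← Set.ncard_coe_finset]
  exact mul_inv_cancel₀ (Nat.cast_ne_zero.2 ((Set.ncard_pos (by simpa using hA)).2
    (by simpa using hne)).ne')

lemma sum_abs_sub_unifDensity_le (hA : A.Finite) (hA' : A.Nonempty) (hB : B.Finite)
    (hB' : B.Nonempty) {s : Finset V} (hAs : A ⊆ s) (hBs : B ⊆ s) :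
    ∑ z ∈ s, |unifDensity A z - unifDensity B z| ≤ 2 :=
  calc ∑ z ∈ s, |unifDensity A z - unifDensity B z|
      ≤ ∑ z ∈ s, (unifDensity A z + unifDensity B z) := by
        gcongr with z
        rw [abs_sub_le_iff]
        constructor <;> linarith [unifDensity_nonneg (A := A) z, unifDensity_nonneg (A := B) z]
    _ = 2 := by
        rw [Finset.sum_add_distrib, sum_unifDensity hA hA' hAs, sum_unifDensity hB hB' hBs]
        norm_num

end UnifDensity

lemma measurable_of_eqOn_finite {p : (V → Bool) → Prop} {β : Type*} [MeasurableSpace β]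
    {T : Set V} (hT : T.Finite) {g : Subtype p → β}
    (hg : ∀ Y Y' : Subtype p, T.EqOn Y.1 Y'.1 → g Y = g Y') : Measurable g := by
  have := hT.to_subtype
  let π : Subtype p → T → Bool := fun Y t => Y.1 t
  have hπ : Measurable π :=
    measurable_pi_iff.2 fun t => (measurable_pi_apply (t : V)).comp measurable_subtype_coe
  intro s _
  have hs : g ⁻¹' s = π ⁻¹' (π '' (g ⁻¹' s)) := by
    refine (Set.subset_preimage_image π _).antisymm ?_
    rintro Y ⟨Y', hY', hπY⟩
    rwa [Set.mem_preimage, ← hg Y' Y fun v hv => congrFun hπY ⟨v, hv⟩]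
  rw [hs]
  exact hπ (Set.toFinite _).measurableSet

section RandomSeparator

variable {k : ℕ}

def remaining (Y : SepSpace G k) : Set V :=
  {v | Y.1 v = true}ᶜ

lemma smallComponents_remaining (Y : SepSpace G k) : SmallComponents G (remaining Y) k :=
  Y.2

lemma measurable_unifDensity_cell (hG : ∀ v, (G.neighborSet v).Finite) (x z : V) :
    Measurable fun Y : SepSpace G k => unifDensity (cell G (remaining Y) x) z :=
  measurable_of_eqOn_finite (gball_finite hG x k) fun Y Y' h => by
    rw [cell, cell, (smallComponents_remaining Y).componentIn_congr (smallComponents_remaining Y')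
      fun v hv => by simp [remaining, h hv]]

noncomputable def cellKernel (μ : Measure (SepSpace G k)) (x z : V) : ℝ :=
  ∫ Y, unifDensity (cell G (remaining Y) x) z ∂μ

variable (μ : Measure (SepSpace G k))

lemma cellKernel_nonneg (x z : V) : 0 ≤ cellKernel μ x z :=
  integral_nonneg fun _ => unifDensity_nonneg z

lemma support_cellKernel_subset (x : V) : Function.support (cellKernel μ x) ⊆ gball G x k := by
  intro z hz
  by_contra hzx
  refine hz ((integral_congr_ae (ae_of_all _ fun Y => ?_)).trans (integral_zero _ _))
  exact unifDensity_of_notMem fun h => hzx ((smallComponents_remaining Y).cell_subset_gball x h)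

variable [IsProbabilityMeasure μ] (hG : ∀ v, (G.neighborSet v).Finite)
include hG

lemma integrable_unifDensity_cell (x z : V) :
    Integrable (fun Y : SepSpace G k => unifDensity (cell G (remaining Y) x) z) μ :=
  .of_bound (measurable_unifDensity_cell hG x z).aestronglyMeasurable 1 <| ae_of_all _ fun _ => by
    rw [Real.norm_of_nonneg (unifDensity_nonneg z)]
    exact unifDensity_le_one z

lemma cell_finite (Y : SepSpace G k) (x : V) : (cell G (remaining Y) x).Finite :=
  (gball_finite hG x k).subset ((smallComponents_remaining Y).cell_subset_gball x)

lemma sum_cellKernel {x : V} {s : Finset V} (hs : gball G x k ⊆ s) :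
    ∑ z ∈ s, cellKernel μ x z = 1 := by
  simp only [cellKernel]
  rw [← integral_finsetSum s fun z _ => integrable_unifDensity_cell μ hG x z,
    integral_congr_ae (g := fun _ => (1 : ℝ)) (ae_of_all _ fun Y => ?_), integral_const,
    probReal_univ, one_smul]
  exact sum_unifDensity (cell_finite hG Y x) ⟨x, Set.mem_insert x _⟩
    (((smallComponents_remaining Y).cell_subset_gball x).trans hs)

lemma sum_abs_sub_cellKernel_le {x y : V} (hxy : G.Adj x y) {s : Finset V}
    (hsx : gball G x k ⊆ s) (hsy : gball G y k ⊆ s) :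
    ∑ z ∈ s, |cellKernel μ x z - cellKernel μ y z| ≤
      2 * (μ.real {Y | Y.1 x = true} + μ.real {Y | Y.1 y = true}) := by
  set E : Set (SepSpace G k) := {Y | Y.1 x = true} ∪ {Y | Y.1 y = true}
  have hmeas (v : V) : MeasurableSet {Y : SepSpace G k | Y.1 v = true} :=
    measurableSet_setOfPred.2 <| measurable_of_eqOn_finite (Set.finite_singleton v)
      fun _ _ h => by rw [h rfl]
  have hE : MeasurableSet E := (hmeas x).union (hmeas y)
  have hint := integrable_unifDensity_cell μ hG
  have hpointwise : ∀ Y : SepSpace G k,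
      ∑ z ∈ s, |unifDensity (cell G (remaining Y) x) z - unifDensity (cell G (remaining Y) y) z|
        ≤ 2 * E.indicator 1 Y := by
    intro Y
    by_cases hY : Y ∈ E
    · rw [Set.indicator_of_mem hY, Pi.one_apply, mul_one]
      exact sum_abs_sub_unifDensity_le (cell_finite hG Y x) ⟨x, Set.mem_insert x _⟩
        (cell_finite hG Y y) ⟨y, Set.mem_insert y _⟩
        (((smallComponents_remaining Y).cell_subset_gball x).trans hsx)
        (((smallComponents_remaining Y).cell_subset_gball y).trans hsy)
    · have hx : x ∈ remaining Y := fun h => hY (Or.inl h)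
      have hy : y ∈ remaining Y := fun h => hY (Or.inr h)
      simp [cell_eq_of_adj hx hy hxy, Set.indicator_of_notMem hY]
  calc ∑ z ∈ s, |cellKernel μ x z - cellKernel μ y z|
      ≤ ∑ z ∈ s, ∫ Y, |unifDensity (cell G (remaining Y) x) z
          - unifDensity (cell G (remaining Y) y) z| ∂μ := by
        gcongr with z
        rw [cellKernel, cellKernel, ← integral_sub (hint x z) (hint y z)]
        exact abs_integral_le_integral_abs
    _ = ∫ Y, ∑ z ∈ s, |unifDensity (cell G (remaining Y) x) z
          - unifDensity (cell G (remaining Y) y) z| ∂μ :=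
        (integral_finsetSum s fun z _ => ((hint x z).sub (hint y z)).abs).symm
    _ ≤ ∫ Y, 2 * E.indicator 1 Y ∂μ :=
        integral_mono (integrable_finsetSum s fun z _ => ((hint x z).sub (hint y z)).abs)
          (((integrable_const 1).indicator hE).const_mul 2) hpointwise
    _ = 2 * μ.real E := by rw [integral_const_mul, integral_indicator_one hE]
    _ ≤ 2 * (μ.real {Y | Y.1 x = true} + μ.real {Y | Y.1 y = true}) := by
        gcongr
        exact measureReal_union_le _ _

theorem propertyAWith_cellKernel {ε : ℝ}
    (hμ : ∀ x, μ.real {Y : SepSpace G k | Y.1 x = true} < ε / 4) :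
    PropertyAWith G ε k := by
  refine ⟨cellKernel μ, fun x => (gball_finite hG x k).subset (support_cellKernel_subset μ x),
    cellKernel_nonneg μ, fun x => ?_, fun x _ hz => support_cellKernel_subset μ x hz,
    fun x y hxy => ?_⟩
  · rw [finsum_eq_sum_of_support_subset _ (s := (gball_finite hG x k).toFinset)
      (by simpa using support_cellKernel_subset μ x)]
    exact sum_cellKernel μ hG (by simp)
  · set s := ((gball_finite hG x k).union (gball_finite hG y k)).toFinset
    have hsx : gball G x k ⊆ s := by simp [s]
    have hsy : gball G y k ⊆ s := by simp [s]
    have hsupp : Function.support (fun z => |cellKernel μ x z - cellKernel μ y z|) ⊆ s := by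
      intro z hz
      by_contra hzs
      have hx : cellKernel μ x z = 0 := Function.notMem_support.1 fun h =>
        hzs (hsx (support_cellKernel_subset μ x h))
      have hy : cellKernel μ y z = 0 := Function.notMem_support.1 fun h =>
        hzs (hsy (support_cellKernel_subset μ y h))
      simp [hx, hy] at hz
    rw [finsum_eq_sum_of_support_subset _ hsupp]
    linarith [sum_abs_sub_cellKernel_le μ hG hxy hsx hsy, hμ x, hμ y]

end RandomSeparator

theorem stronglyHyperfinite_implies_propertyA_general
    (d : ℕ) {V : Type}
    (G : SimpleGraph V) (hdeg : DegLE G d)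
    (hSH : StronglyHyperfinite G) :
    PropertyA G := by
  intro ε hε
  obtain ⟨k, hk, μ, hμ, hμx⟩ := hSH (ε / 4) (by positivity)
  have : IsProbabilityMeasure μ := ⟨hμ⟩
  exact ⟨k, hk, propertyAWith_cellKernel μ (fun v => (hdeg v).1)
    fun x => ENNReal.toReal_lt_of_lt_ofReal (hμx x)⟩

/-- Strong hyperfiniteness implies Property A. -/
theorem stronglyHyperfinite_implies_propertyA
    (d : ℕ) (hd : 0 < d) {V : Type} [Countable V]
    (G : SimpleGraph V) (hdeg : DegLE G d)
    (hSH : StronglyHyperfinite G) :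
    PropertyA G :=
  stronglyHyperfinite_implies_propertyA_general d G hdeg hSH

end AFPaper
end
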